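/- Every weakly cartesian natural transformation between finitary polynomial endofunctors on a slice of Set is cartesian. -/

import Mathlib

open CategoryTheory CategoryTheory.Limits

/-- A finitary polynomial diagram `O ← E → B → O` over the set `O`
(the middle map `p` has finite fibres). -/
structure PolyDiag (O : Type) : Type 1 where
  B : Type
  E : Type
  t : B → O
  p : E → B
  s : E → O
  fin : ∀ b, Finite {e : E // p e = b}

/-- The value of the polynomial functor `t_! p_* s*` on an object of `Set/O`. -/
def polyObj {O : Type} (D : PolyDiag O) (X : Over O) : Type :=
  Σ b : D.B, { v : {e : D.E // D.p e = b} → X.left // ∀ e, X.hom (v e) = D.s e.1 }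

/-- The polynomial functor `t_! ∘ p_* ∘ s* : Set/O ⥤ Set/O` associated to a polynomial
diagram. -/
def polyFunctor {O : Type} (D : PolyDiag O) : Over O ⥤ Over O where
  obj X := Over.mk (show polyObj D X ⟶ O from TypeCat.ofHom fun z => D.t z.1)
  map {X Y} g := Over.homMk
    (TypeCat.ofHom fun z => ⟨z.1, fun e => g.left (z.2.1 e), fun e => by
      rw [← z.2.2 e]; exact ConcreteCategory.congr_hom (Over.w g) (z.2.1 e)⟩)
    rfl
  map_id X := by
    apply CategoryTheory.Over.OverMorphism.ext
    ext z
    rfl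
  map_comp f g := by
    apply CategoryTheory.Over.OverMorphism.ext
    ext z
    rfl

/-- A natural transformation is cartesian when all its naturality squares are pullbacks. -/
def IsCartesianNT {C D : Type*} [Category C] [Category D] {F G : C ⥤ D} (τ : F ⟶ G) : Prop :=
  ∀ {X Y : C} (g : X ⟶ Y), IsPullback (F.map g) (τ.app X) (τ.app Y) (G.map g)

/-- A natural transformation between endofunctors on `Set/O` is weakly cartesian when
each naturality square is a weak pullback, i.e. the comparison map into the pullback is
surjective. -/
def IsWeaklyCartesianNT {O : Type} {F G : Over O ⥤ Over O} (τ : F ⟶ G) : Prop :=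
  ∀ {X Y : Over O} (g : X ⟶ Y) (a : (F.obj Y).left) (b : (G.obj X).left),
    (τ.app Y).left a = (G.map g).left b →
    ∃ w : (F.obj X).left, (F.map g).left w = a ∧ (τ.app X).left w = b

/-! A transformation `τ : P_D ⟶ P_D'` is determined by its values on the generic elements
`(b, id) ∈ P_D(E_b)`: each is some `(b', u_b)` with `u_b : E'_{b'} → E_b`, and `τ` sends
`(b, v)` to `(b', v ∘ u_b)`. Weak cartesianness at the inclusion of the image of `u_b` into
`E_b` forces `u_b` to be surjective, so `τ` is injective on each fibre of `P_D X → B`. This is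
the injectivity of the comparison maps into the pullbacks, whose surjectivity is weak
cartesianness. Both notions are invariant under isomorphism of functors. -/

section NatTrans

variable {O : Type} {F G H : Over O ⥤ Over O}

lemma isCartesianNT_iff_equifibered {C D : Type*} [Category C] [Category D] {F G : C ⥤ D}
    (τ : F ⟶ G) : IsCartesianNT τ ↔ NatTrans.Equifibered τ :=
  Iff.rfl

lemma IsCartesianNT.isWeaklyCartesianNT {τ : F ⟶ G} (hτ : IsCartesianNT τ) :
    IsWeaklyCartesianNT τ :=
  fun g a b h => Types.exists_of_isPullback ((hτ g).map (Over.forget O)) a b h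

lemma IsWeaklyCartesianNT.of_isIso (τ : F ⟶ G) [IsIso τ] : IsWeaklyCartesianNT τ :=
  IsCartesianNT.isWeaklyCartesianNT <| (isCartesianNT_iff_equifibered τ).2 <|
    NatTrans.Equifibered.of_isIso τ

lemma IsWeaklyCartesianNT.comp {τ : F ⟶ G} {σ : G ⟶ H} (hτ : IsWeaklyCartesianNT τ)
    (hσ : IsWeaklyCartesianNT σ) : IsWeaklyCartesianNT (τ ≫ σ) := by
  intro X Y g a c h
  obtain ⟨b, hb, rfl⟩ := hσ g ((τ.app Y).left a) c h
  obtain ⟨w, hw, rfl⟩ := hτ g a b hb.symm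
  exact ⟨w, hw, rfl⟩

lemma IsWeaklyCartesianNT.isCartesianNT_of_injective {τ : F ⟶ G} (hτ : IsWeaklyCartesianNT τ)
    (hinj : ∀ {X Y : Over O} (g : X ⟶ Y) (w w' : (F.obj X).left),
      (F.map g).left w = (F.map g).left w' → (τ.app X).left w = (τ.app X).left w' → w = w') :
    IsCartesianNT τ := by
  intro X Y g
  refine IsPullback.of_map (Over.forget O) (τ.naturality g) ?_
  exact (Types.isPullback_iff _ _ _ _).2
    ⟨congrArg CommaMorphism.left (τ.naturality g), fun w w' h => hinj g w w' h.1 h.2,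
      fun a b h => hτ g a b h⟩

end NatTrans

namespace PolyDiag

variable {O : Type} (D : PolyDiag O)

def fiber (b : D.B) : Over O :=
  Over.mk (TypeCat.ofHom fun e : {e : D.E // D.p e = b} => D.s e.1)

def generic (b : D.B) : polyObj D (D.fiber b) :=
  ⟨b, fun e => e, fun _ => rfl⟩

end PolyDiag

section Polynomial

variable {O : Type} {D D' : PolyDiag O}

def polyObj.toFiberHom {X : Over O} (z : polyObj D X) : D.fiber z.1 ⟶ X :=
  Over.homMk (TypeCat.ofHom z.2.1) (by ext e; exact z.2.2 e)

def classifier (τ : polyFunctor D ⟶ polyFunctor D') (b : D.B) : polyObj D' (D.fiber b) :=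
  (τ.app (D.fiber b)).left (D.generic b)

lemma polyObj.val_eq_of_mk_eq {X : Over O} {b : D.B}
    {v v' : {v : {e : D.E // D.p e = b} → X.left // ∀ e, X.hom (v e) = D.s e.1}}
    (h : (⟨b, v⟩ : polyObj D X) = ⟨b, v'⟩) : v.1 = v'.1 :=
  congrArg Subtype.val (eq_of_heq (Sigma.mk.inj h).2)

lemma polyFunctor_app_apply (τ : polyFunctor D ⟶ polyFunctor D') (X : Over O)
    (z : polyObj D X) :
    (τ.app X).left z =
      ⟨(classifier τ z.1).1, fun e' => z.2.1 ((classifier τ z.1).2.1 e'),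
        fun e' => (z.2.2 _).trans ((classifier τ z.1).2.2 e')⟩ :=
  ConcreteCategory.congr_hom (congrArg CommaMorphism.left (τ.naturality z.toFiberHom))
    (D.generic z.1)

lemma classifier_surjective {τ : polyFunctor D ⟶ polyFunctor D'} (hτ : IsWeaklyCartesianNT τ)
    (b : D.B) : Function.Surjective (classifier τ b).2.1 := by
  set u := (classifier τ b).2.1
  let image : Over O :=
    Over.mk (TypeCat.ofHom fun e : Set.range u => D.s e.1.1)
  let incl : image ⟶ D.fiber b := Over.homMk (TypeCat.ofHom Subtype.val) rfl
  let ξ : polyObj D' image :=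
    ⟨(classifier τ b).1, fun e' => ⟨u e', e', rfl⟩, (classifier τ b).2.2⟩
  obtain ⟨⟨b', v, _⟩, hw, -⟩ := hτ incl (D.generic b) ξ rfl
  obtain rfl : b' = b := congrArg Sigma.fst hw
  have hv_id : (fun e => (v e).1) = id := polyObj.val_eq_of_mk_eq hw
  intro e
  obtain ⟨e', he'⟩ := (v e).2
  exact ⟨e', he'.trans (congrFun hv_id e)⟩

lemma eq_of_polyFunctor_app_eq {τ : polyFunctor D ⟶ polyFunctor D'}
    (hu : ∀ b, Function.Surjective (classifier τ b).2.1) {X : Over O} {z z' : polyObj D X}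
    (hb : z.1 = z'.1) (h : (τ.app X).left z = (τ.app X).left z') : z = z' := by
  obtain ⟨b, v, _⟩ := z
  obtain ⟨b', v', _⟩ := z'
  obtain rfl : b = b' := hb
  have hvu : v ∘ (classifier τ b).2.1 = v' ∘ (classifier τ b).2.1 :=
    polyObj.val_eq_of_mk_eq <|
      (polyFunctor_app_apply τ X _).symm.trans (h.trans (polyFunctor_app_apply τ X _))
  obtain rfl : v = v' := (hu b).injective_comp_right hvu
  rfl

theorem isCartesianNT_of_isWeaklyCartesianNT_polyFunctor {τ : polyFunctor D ⟶ polyFunctor D'}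
    (hτ : IsWeaklyCartesianNT τ) : IsCartesianNT τ :=
  hτ.isCartesianNT_of_injective fun _ _ _ hg h =>
    eq_of_polyFunctor_app_eq (classifier_surjective hτ) (congrArg Sigma.fst hg :) h

end Polynomial

/-- Every weakly cartesian natural transformation between finitary
polynomial endofunctors on a slice of `Set` (functors isomorphic to `t_! p_* s*` for
finitary polynomial diagrams) is cartesian. -/
theorem weakly_cartesian_of_polynomial_is_cartesian {O : Type}
    (F G : Over O ⥤ Over O)
    (hF : ∃ D : PolyDiag O, Nonempty (F ≅ polyFunctor D))
    (hG : ∃ D' : PolyDiag O, Nonempty (G ≅ polyFunctor D'))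
    (τ : F ⟶ G) (hτ : IsWeaklyCartesianNT τ) :
    IsCartesianNT τ := by
  obtain ⟨D, ⟨iF⟩⟩ := hF
  obtain ⟨D', ⟨iG⟩⟩ := hG
  have hσ : IsWeaklyCartesianNT (iF.inv ≫ τ ≫ iG.hom) :=
    IsWeaklyCartesianNT.comp (IsWeaklyCartesianNT.of_isIso _)
      (IsWeaklyCartesianNT.comp hτ (IsWeaklyCartesianNT.of_isIso _))
  have hτ_eq : τ = iF.hom ≫ (iF.inv ≫ τ ≫ iG.hom) ≫ iG.inv := by simp
  rw [isCartesianNT_iff_equifibered, hτ_eq]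
  exact (NatTrans.Equifibered.of_isIso _).comp
    (((isCartesianNT_iff_equifibered _).1
      (isCartesianNT_of_isWeaklyCartesianNT_polyFunctor hσ)).comp
      (NatTrans.Equifibered.of_isIso _))
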